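/- arXiv:2303.01164 — 3 statements merged into one kernel-verified Lean document; each statement's English description precedes it below -/
import Mathlib

section
/- Let A be a symmetric real 2m×2m positive definite matrix and B a real k×k matrix with B + Bᵀ positive definite. Define H(x,q,p) = ½ xᵀAx + pᵀBq − 1 on ℝ^{2m} × ℝᵏ × ℝᵏ, and let Y be the vector field Y(x,q,p) = (½x, ½q + a p, ½p + a q) where a = ‖B‖/c + 1 and c > 0 is chosen so that xᵀAx ≥ c|x|² and vᵀ(B+Bᵀ)v ≥ c|v|² for all x, v. Then dH(Y)(x,q,p) ≥ (c/2)(|x|² + |q|² + |p|²) for all (x,q,p). -/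
open Matrix

/-- The operator norm of a real matrix acting on Euclidean space. -/
noncomputable def matOpNorm {k : ℕ} (B : Matrix (Fin k) (Fin k) ℝ) : ℝ :=
  ‖(Matrix.toEuclideanCLM (𝕜 := ℝ) B :
      EuclideanSpace ℝ (Fin k) →L[ℝ] EuclideanSpace ℝ (Fin k))‖

/-!
Coercivity bounds `½ xᵀAx` below by `(c/2)|x|²`, and, since `qᵀBq = ½ qᵀ(B + Bᵀ)q`, also `qᵀBq`
by `(c/2)|q|²`. The cross term only satisfies `|pᵀBq| ≤ ‖B‖|p||q| ≤ (‖B‖/2)(|p|² + |q|²)`, but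
`a` is chosen so that `ac = ‖B‖ + c`: then `a(qᵀBq + pᵀBp) ≥ ((‖B‖ + c)/2)(|q|² + |p|²)` absorbs it
with `(c/2)(|q|² + |p|²)` to spare.
-/

theorem matOpNorm_nonneg {k : ℕ} (B : Matrix (Fin k) (Fin k) ℝ) : 0 ≤ matOpNorm B :=
  norm_nonneg _

theorem Matrix.dotProduct_add_transpose_mulVec_self {n R : Type*} [Fintype n] [CommSemiring R]
    (B : Matrix n n R) (v : n → R) :
    v ⬝ᵥ (B + Bᵀ) *ᵥ v = 2 * (v ⬝ᵥ B *ᵥ v) := by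
  rw [add_mulVec, dotProduct_add, dotProduct_transpose_mulVec, two_mul]

theorem EuclideanSpace.norm_toLp_sq {n : Type*} [Fintype n] (v : n → ℝ) :
    ‖WithLp.toLp 2 v‖ ^ 2 = v ⬝ᵥ v := by
  rw [← real_inner_self_eq_norm_sq, EuclideanSpace.inner_toLp_toLp, star_trivial]

theorem abs_dotProduct_mulVec_le_matOpNorm {k : ℕ} (B : Matrix (Fin k) (Fin k) ℝ)
    (p q : Fin k → ℝ) :
    |p ⬝ᵥ B *ᵥ q| ≤ matOpNorm B * ‖WithLp.toLp 2 p‖ * ‖WithLp.toLp 2 q‖ := by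
  set T := toEuclideanCLM (n := Fin k) (𝕜 := ℝ) B
  calc |p ⬝ᵥ B *ᵥ q| = |inner ℝ (WithLp.toLp 2 p) (T (WithLp.toLp 2 q))| := by
        rw [inner_toEuclideanCLM]
    _ ≤ ‖WithLp.toLp 2 p‖ * ‖T (WithLp.toLp 2 q)‖ := abs_real_inner_le_norm _ _
    _ ≤ ‖WithLp.toLp 2 p‖ * (matOpNorm B * ‖WithLp.toLp 2 q‖) := by gcongr; exact T.le_opNorm _
    _ = matOpNorm B * ‖WithLp.toLp 2 p‖ * ‖WithLp.toLp 2 q‖ := by ring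

theorem abs_dotProduct_mulVec_le_matOpNorm_mul_add {k : ℕ} (B : Matrix (Fin k) (Fin k) ℝ)
    (p q : Fin k → ℝ) :
    |p ⬝ᵥ B *ᵥ q| ≤ matOpNorm B / 2 * (p ⬝ᵥ p + q ⬝ᵥ q) := by
  have hB := matOpNorm_nonneg B
  calc |p ⬝ᵥ B *ᵥ q| ≤ matOpNorm B * ‖WithLp.toLp 2 p‖ * ‖WithLp.toLp 2 q‖ :=
        abs_dotProduct_mulVec_le_matOpNorm B p q
    _ = matOpNorm B / 2 * (2 * ‖WithLp.toLp 2 p‖ * ‖WithLp.toLp 2 q‖) := by ring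
    _ ≤ matOpNorm B / 2 * (p ⬝ᵥ p + q ⬝ᵥ q) := by
        gcongr
        rw [← EuclideanSpace.norm_toLp_sq, ← EuclideanSpace.norm_toLp_sq]
        exact two_mul_le_add_sq _ _

theorem Matrix.half_mul_le_dotProduct_mulVec_of_le_add_transpose {n : Type*} [Fintype n]
    {B : Matrix n n ℝ} {c : ℝ} {v : n → ℝ} (h : c * (v ⬝ᵥ v) ≤ v ⬝ᵥ (B + Bᵀ) *ᵥ v) :
    c / 2 * (v ⬝ᵥ v) ≤ v ⬝ᵥ B *ᵥ v := by
  rw [dotProduct_add_transpose_mulVec_self] at h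
  linarith

theorem liouville_estimate_general (m k : ℕ)
    (A : Matrix (Fin (2 * m)) (Fin (2 * m)) ℝ) (B : Matrix (Fin k) (Fin k) ℝ)
    (c a : ℝ) (hc : 0 < c)
    (hAc : ∀ x : Fin (2 * m) → ℝ, c * (x ⬝ᵥ x) ≤ x ⬝ᵥ A.mulVec x)
    (hBc : ∀ v : Fin k → ℝ, c * (v ⬝ᵥ v) ≤ v ⬝ᵥ (B + Bᵀ).mulVec v)
    (ha : a = matOpNorm B / c + 1) :
    ∀ (x : Fin (2 * m) → ℝ) (q p : Fin k → ℝ),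
      c / 2 * (x ⬝ᵥ x + q ⬝ᵥ q + p ⬝ᵥ p) ≤
        1 / 2 * (x ⬝ᵥ A.mulVec x) + p ⬝ᵥ B.mulVec q
          + a * (q ⬝ᵥ B.mulVec q + p ⬝ᵥ B.mulVec p) := by
  intro x q p
  have hq := half_mul_le_dotProduct_mulVec_of_le_add_transpose (hBc q)
  have hp := half_mul_le_dotProduct_mulVec_of_le_add_transpose (hBc p)
  have hpq := neg_le_of_abs_le (abs_dotProduct_mulVec_le_matOpNorm_mul_add B p q)
  have ha0 : 0 ≤ a := by rw [ha]; have := matOpNorm_nonneg B; positivity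
  have hdiag : (matOpNorm B + c) / 2 * (q ⬝ᵥ q + p ⬝ᵥ p) ≤ a * (q ⬝ᵥ B *ᵥ q + p ⬝ᵥ B *ᵥ p) := by
    have hac : a * c = matOpNorm B + c := by rw [ha]; field_simp
    calc (matOpNorm B + c) / 2 * (q ⬝ᵥ q + p ⬝ᵥ p)
        = a * (c / 2 * (q ⬝ᵥ q) + c / 2 * (p ⬝ᵥ p)) := by rw [← hac]; ring
      _ ≤ a * (q ⬝ᵥ B *ᵥ q + p ⬝ᵥ B *ᵥ p) := by gcongr
  linarith [hAc x]

/-- Estimate `dH(Y) ≥ (c/2)(|x|² + |q|² + |p|²)` for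
`H(x,q,p) = ½xᵀAx + pᵀBq − 1` and the Liouville vector field
`Y = (½x, ½q + a p, ½p + a q)`, where `dH(Y) = ½xᵀAx + pᵀBq + a(qᵀBq + pᵀBp)`. -/
theorem liouville_estimate (m k : ℕ)
    (A : Matrix (Fin (2 * m)) (Fin (2 * m)) ℝ) (B : Matrix (Fin k) (Fin k) ℝ)
    (c a : ℝ) (hc : 0 < c) (hA : A.IsSymm) (hApos : A.PosDef)
    (hBpos : (B + Bᵀ).PosDef)
    (hAc : ∀ x : Fin (2 * m) → ℝ, c * (x ⬝ᵥ x) ≤ x ⬝ᵥ A.mulVec x)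
    (hBc : ∀ v : Fin k → ℝ, c * (v ⬝ᵥ v) ≤ v ⬝ᵥ (B + Bᵀ).mulVec v)
    (ha : a = matOpNorm B / c + 1) :
    ∀ (x : Fin (2 * m) → ℝ) (q p : Fin k → ℝ),
      c / 2 * (x ⬝ᵥ x + q ⬝ᵥ q + p ⬝ᵥ p) ≤
        1 / 2 * (x ⬝ᵥ A.mulVec x) + p ⬝ᵥ B.mulVec q
          + a * (q ⬝ᵥ B.mulVec q + p ⬝ᵥ B.mulVec p) :=
  liouville_estimate_general m k A B c a hc hAc hBc ha
end

section
/- Let X, Y be topological spaces, A ⊆ X open, and f : A → Y an open topological embedding. Define the adjunction space X ∪_f Y = (X ⊔ Y)/∼ where a ∼ f(a) for a ∈ A, with the quotient topology. Then the natural maps X → X ∪_f Y and Y → X ∪_f Y are open topological embeddings. -/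
private theorem adj_eqv_char {X Y : Type*} {A : Set X} {f : A → Y}
    (hf : Function.Injective f) {u v : X ⊕ Y}
    (h : Relation.EqvGen
      (fun u v : X ⊕ Y => ∃ a : A, u = Sum.inl (a : X) ∧ v = Sum.inr (f a)) u v) :
    u = v ∨ (∃ a : A, u = Sum.inl (a : X) ∧ v = Sum.inr (f a)) ∨
      (∃ a : A, v = Sum.inl (a : X) ∧ u = Sum.inr (f a)) := by
  induction h with
  | rel _ _ h => exact Or.inr (Or.inl h)
  | refl => exact Or.inl rfl
  | symm _ _ _ ih =>
    rcases ih with rfl | h | h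
    · exact Or.inl rfl
    · exact Or.inr (Or.inr h)
    · exact Or.inr (Or.inl h)
  | trans x y z _ _ ih1 ih2 =>
    rcases ih1 with rfl | ⟨a, rfl, rfl⟩ | ⟨a, h1, rfl⟩
    · exact ih2
    · rcases ih2 with rfl | ⟨b, hb, _⟩ | ⟨b, hb1, hb2⟩
      · exact Or.inr (Or.inl ⟨a, rfl, rfl⟩)
      · simp at hb
      · obtain rfl : a = b := hf (Sum.inr.inj hb2)
        exact Or.inl (by rw [hb1])
    · subst h1
      rcases ih2 with rfl | ⟨b, hb1, hb2⟩ | ⟨b, hb1, hb2⟩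
      · exact Or.inr (Or.inr ⟨a, rfl, rfl⟩)
      · obtain rfl : a = b := Subtype.ext (Sum.inl.inj hb1)
        exact Or.inl hb2.symm
      · simp at hb2

/-- Gluing two topological spaces along an open embedding defined on an open
subset: the natural maps into the adjunction space are open embeddings. -/
theorem adjunction_open_embeddings (X Y : Type*) [TopologicalSpace X]
    [TopologicalSpace Y] (A : Set X) (hA : IsOpen A) (f : A → Y)
    (hf : Topology.IsOpenEmbedding f) :
    Topology.IsOpenEmbedding
      (fun x : X => Quot.mk
        (fun u v : X ⊕ Y => ∃ a : A, u = Sum.inl (a : X) ∧ v = Sum.inr (f a))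
        (Sum.inl x)) ∧
    Topology.IsOpenEmbedding
      (fun y : Y => Quot.mk
        (fun u v : X ⊕ Y => ∃ a : A, u = Sum.inl (a : X) ∧ v = Sum.inr (f a))
        (Sum.inr y)) := by
  set R : X ⊕ Y → X ⊕ Y → Prop :=
    fun u v => ∃ a : A, u = Sum.inl (a : X) ∧ v = Sum.inr (f a) with hR
  have hinj : Function.Injective f := hf.injective
  -- characterization of equality in the quotient
  have key : ∀ u v : X ⊕ Y, Quot.mk R u = Quot.mk R v →
      u = v ∨ (∃ a : A, u = Sum.inl (a : X) ∧ v = Sum.inr (f a)) ∨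
        (∃ a : A, v = Sum.inl (a : X) ∧ u = Sum.inr (f a)) := by
    intro u v h
    exact adj_eqv_char hinj (Quot.eq.mp h)
  have cont : Continuous (Quot.mk R) := continuous_quot_mk
  constructor
  · refine Topology.IsOpenEmbedding.of_continuous_injective_isOpenMap
      (cont.comp continuous_inl) ?_ ?_
    · intro x₁ x₂ h
      rcases key _ _ h with h | ⟨a, h1, h2⟩ | ⟨a, h1, h2⟩
      · exact Sum.inl.inj h
      · simp at h2
      · simp at h2
    · intro U hU
      rw [isOpen_coinduced, isOpen_sum_iff]
      constructor
      · have : Sum.inl ⁻¹' (Quot.mk R ⁻¹'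
            ((fun x : X => Quot.mk R (Sum.inl x)) '' U)) = U := by
          ext x
          simp only [Set.mem_preimage, Set.mem_image]
          constructor
          · rintro ⟨u, hu, h⟩
            rcases key _ _ h with h | ⟨a, h1, h2⟩ | ⟨a, h1, h2⟩
            · exact (Sum.inl.inj h) ▸ hu
            · simp at h2
            · simp at h2
          · exact fun hx => ⟨x, hx, rfl⟩
        rw [this]; exact hU
      · have : Sum.inr ⁻¹' (Quot.mk R ⁻¹'
            ((fun x : X => Quot.mk R (Sum.inl x)) '' U)) =
            f '' (Subtype.val ⁻¹' U) := by
          ext y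
          simp only [Set.mem_preimage, Set.mem_image]
          constructor
          · rintro ⟨u, hu, h⟩
            rcases key _ _ h with h | ⟨a, h1, h2⟩ | ⟨a, h1, h2⟩
            · simp at h
            · exact ⟨a, (Sum.inl.inj h1) ▸ hu, (Sum.inr.inj h2).symm⟩
            · simp at h2
          · rintro ⟨a, ha, rfl⟩
            exact ⟨a, ha, Quot.sound ⟨a, rfl, rfl⟩⟩
        rw [this]
        exact hf.isOpenMap _ (hU.preimage continuous_subtype_val)
  · refine Topology.IsOpenEmbedding.of_continuous_injective_isOpenMap
      (cont.comp continuous_inr) ?_ ?_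
    · intro y₁ y₂ h
      rcases key _ _ h with h | ⟨a, h1, h2⟩ | ⟨a, h1, h2⟩
      · exact Sum.inr.inj h
      · simp at h1
      · simp at h1
    · intro V hV
      rw [isOpen_coinduced, isOpen_sum_iff]
      constructor
      · have : Sum.inl ⁻¹' (Quot.mk R ⁻¹'
            ((fun y : Y => Quot.mk R (Sum.inr y)) '' V)) =
            Subtype.val '' (f ⁻¹' V) := by
          ext x
          simp only [Set.mem_preimage, Set.mem_image]
          constructor
          · rintro ⟨v, hv, h⟩
            rcases key _ _ h with h | ⟨a, h1, h2⟩ | ⟨a, h1, h2⟩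
            · simp at h
            · simp at h1
            · exact ⟨a, (Sum.inr.inj h2) ▸ hv, (Sum.inl.inj h1).symm⟩
          · rintro ⟨a, ha, rfl⟩
            exact ⟨f a, ha, (Quot.sound ⟨a, rfl, rfl⟩).symm⟩
        rw [this]
        exact hA.isOpenMap_subtype_val _ (hV.preimage hf.continuous)
      · have : Sum.inr ⁻¹' (Quot.mk R ⁻¹'
            ((fun y : Y => Quot.mk R (Sum.inr y)) '' V)) = V := by
          ext y
          simp only [Set.mem_preimage, Set.mem_image]
          constructor
          · rintro ⟨v, hv, h⟩
            rcases key _ _ h with h | ⟨a, h1, h2⟩ | ⟨a, h1, h2⟩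
            · exact (Sum.inr.inj h) ▸ hv
            · simp at h1
            · simp at h1
          · exact fun hy => ⟨y, hy, rfl⟩
        rw [this]; exact hV
end

section
/- Define f : (0,π) × (ℝ/πℤ) × ℝ² → (0,π) × (ℝ/πℤ) × ℝ² by f(φ,θ,s,t) = (cot⁻¹(t), θ, s, cot(φ)). Then f is a diffeomorphism and f*(ω₁) = ω₂, where ω₁ = (1/sin²φ) dφ ∧ dθ + ds ∧ dt and ω₂ = (1/sin²φ) dφ ∧ ds + dθ ∧ dt. In particular ((0,π)×(ℝ/πℤ)×ℝ², ω₁) and ((0,π)×(ℝ/πℤ)×ℝ², ω₂) are symplectomorphic. -/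
/-!
`cot : (0, π) → ℝ` is a diffeomorphism with inverse `t ↦ π/2 - arctan t`, so `f` is an involution
of `(0, π) × ℝ³`. Since `d(cot φ) = -(1/sin²φ) dφ` and `sin²(π/2 - arctan t) = 1/(1 + t²)`,
`f` pulls `dt` back to `-(1/sin²φ) dφ` and `(1/sin²φ) dφ` back to `-dt`; hence
`f*ω₁ = -dt ∧ dθ - ds ∧ (1/sin²φ) dφ = ω₂`.
-/

/-- The map `f(φ,θ,s,t) = (cot⁻¹ t, θ, s, cot φ)`, with `cot⁻¹ t = π/2 − arctan t`. -/
noncomputable def cotFlip (x : ℝ × ℝ × ℝ × ℝ) : ℝ × ℝ × ℝ × ℝ :=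
  (Real.pi / 2 - Real.arctan x.2.2.2, x.2.1, x.2.2.1, Real.cot x.1)

/-- The 2-form `ω₁ = (1/sin²φ) dφ ∧ dθ + ds ∧ dt`. -/
noncomputable def omega1 (x u v : ℝ × ℝ × ℝ × ℝ) : ℝ :=
  1 / Real.sin x.1 ^ 2 * (u.1 * v.2.1 - u.2.1 * v.1)
    + (u.2.2.1 * v.2.2.2 - u.2.2.2 * v.2.2.1)

/-- The 2-form `ω₂ = (1/sin²φ) dφ ∧ ds + dθ ∧ dt`. -/
noncomputable def omega2 (x u v : ℝ × ℝ × ℝ × ℝ) : ℝ :=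
  1 / Real.sin x.1 ^ 2 * (u.1 * v.2.2.1 - u.2.2.1 * v.1)
    + (u.2.1 * v.2.2.2 - u.2.2.2 * v.2.1)

open Real Set

namespace Real

lemma cot_pi_div_two_sub (x : ℝ) : cot (π / 2 - x) = tan x := by
  rw [cot_eq_cos_div_sin, tan_eq_sin_div_cos, sin_pi_div_two_sub, cos_pi_div_two_sub]

lemma hasDerivAt_cot {x : ℝ} (hx : sin x ≠ 0) : HasDerivAt cot (-(sin x ^ 2)⁻¹) x := by
  have hcot : cot = cos / sin := funext cot_eq_cos_div_sin
  rw [hcot]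
  refine ((hasDerivAt_cos x).div (hasDerivAt_sin x) hx).congr_deriv ?_
  field_simp
  linear_combination -sin_sq_add_cos_sq x

lemma pi_div_two_sub_arctan_mem_Ioo (t : ℝ) : π / 2 - arctan t ∈ Ioo 0 π := by
  obtain ⟨hlow, hup⟩ := arctan_mem_Ioo t
  constructor <;> linarith

lemma cot_pi_div_two_sub_arctan (t : ℝ) : cot (π / 2 - arctan t) = t := by
  rw [cot_pi_div_two_sub, tan_arctan]

lemma pi_div_two_sub_arctan_cot {φ : ℝ} (hφ : φ ∈ Ioo 0 π) : π / 2 - arctan (cot φ) = φ := by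
  obtain ⟨hpos, hlt⟩ := hφ
  rw [← sub_sub_cancel (π / 2) φ, cot_pi_div_two_sub, arctan_tan (by linarith) (by linarith)]

lemma sin_pi_div_two_sub_arctan_sq (t : ℝ) : sin (π / 2 - arctan t) ^ 2 = (1 + t ^ 2)⁻¹ := by
  rw [sin_pi_div_two_sub, cos_arctan, div_pow, one_pow, sq_sqrt (by positivity), one_div]

end Real

noncomputable def cotFlipDeriv (x : ℝ × ℝ × ℝ × ℝ) : ℝ × ℝ × ℝ × ℝ →L[ℝ] ℝ × ℝ × ℝ × ℝ :=
  (-(1 + x.2.2.2 ^ 2)⁻¹ • (ContinuousLinearMap.snd ℝ ℝ ℝ).comp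
      ((ContinuousLinearMap.snd ℝ ℝ (ℝ × ℝ)).comp (ContinuousLinearMap.snd ℝ ℝ (ℝ × ℝ × ℝ)))).prod
    (((ContinuousLinearMap.fst ℝ ℝ (ℝ × ℝ)).comp (ContinuousLinearMap.snd ℝ ℝ (ℝ × ℝ × ℝ))).prod
      (((ContinuousLinearMap.fst ℝ ℝ ℝ).comp
          ((ContinuousLinearMap.snd ℝ ℝ (ℝ × ℝ)).comp (ContinuousLinearMap.snd ℝ ℝ (ℝ × ℝ × ℝ)))).prod
        (-(sin x.1 ^ 2)⁻¹ • ContinuousLinearMap.fst ℝ ℝ (ℝ × ℝ × ℝ))))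

@[simp]
lemma cotFlipDeriv_apply (x u : ℝ × ℝ × ℝ × ℝ) :
    cotFlipDeriv x u =
      (-(1 + x.2.2.2 ^ 2)⁻¹ * u.2.2.2, u.2.1, u.2.2.1, -(sin x.1 ^ 2)⁻¹ * u.1) :=
  rfl

lemma hasFDerivAt_cotFlip {x : ℝ × ℝ × ℝ × ℝ} (hx : sin x.1 ≠ 0) :
    HasFDerivAt cotFlip (cotFlipDeriv x) x := by
  refine ((((hasDerivAt_arctan _).comp_hasFDerivAt x hasFDerivAt_snd.snd.snd).const_sub
    (π / 2)).prodMk (hasFDerivAt_snd.fst.prodMk (hasFDerivAt_snd.snd.fst.prodMk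
      ((hasDerivAt_cot hx).comp_hasFDerivAt x hasFDerivAt_fst)))).congr_fderiv
        (ContinuousLinearMap.ext fun u => ?_)
  simp

lemma cotFlip_fst_mem_Ioo (x : ℝ × ℝ × ℝ × ℝ) : (cotFlip x).1 ∈ Ioo 0 π :=
  pi_div_two_sub_arctan_mem_Ioo _

lemma cotFlip_cotFlip {x : ℝ × ℝ × ℝ × ℝ} (hx : x.1 ∈ Ioo 0 π) : cotFlip (cotFlip x) = x := by
  simp only [cotFlip, cot_pi_div_two_sub_arctan, pi_div_two_sub_arctan_cot hx]

lemma omega1_cotFlip_cotFlipDeriv {x : ℝ × ℝ × ℝ × ℝ} (hx : sin x.1 ≠ 0)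
    (u v : ℝ × ℝ × ℝ × ℝ) :
    omega1 (cotFlip x) (cotFlipDeriv x u) (cotFlipDeriv x v) = omega2 x u v := by
  have hsin_sq : sin (cotFlip x).1 ^ 2 = (1 + x.2.2.2 ^ 2)⁻¹ := sin_pi_div_two_sub_arctan_sq _
  simp only [omega1, omega2, cotFlipDeriv_apply, hsin_sq]
  field_simp
  ring

/-- The map `f(φ,θ,s,t) = (cot⁻¹ t, θ, s, cot φ)` preserves `{φ ∈ (0,π)}`, is a
diffeomorphism thereof (it is a smooth involution), and pulls back
`ω₁ = (1/sin²φ)dφ∧dθ + ds∧dt` to `ω₂ = (1/sin²φ)dφ∧ds + dθ∧dt`. -/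
theorem cotFlip_symplectomorphism :
    ∀ x : ℝ × ℝ × ℝ × ℝ, x.1 ∈ Set.Ioo 0 Real.pi →
      (cotFlip x).1 ∈ Set.Ioo 0 Real.pi ∧
      cotFlip (cotFlip x) = x ∧
      ∃ L : ℝ × ℝ × ℝ × ℝ →L[ℝ] ℝ × ℝ × ℝ × ℝ,
        HasFDerivAt cotFlip L x ∧
        ∀ u v : ℝ × ℝ × ℝ × ℝ, omega1 (cotFlip x) (L u) (L v) = omega2 x u v := by
  intro x hx
  have hsin : sin x.1 ≠ 0 := (sin_pos_of_pos_of_lt_pi hx.1 hx.2).ne'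
  exact ⟨cotFlip_fst_mem_Ioo x, cotFlip_cotFlip hx, cotFlipDeriv x, hasFDerivAt_cotFlip hsin,
    omega1_cotFlip_cotFlipDeriv hsin⟩
end
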